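/- Controllability on the simplex interior for driftless graph flows: if the graph G is symmetric and strongly connected, then for any μ₀, μ₁ in the interior of the probability simplex P(V), there exist piecewise-continuous nonnegative control functions U_e(t) such that the solution of μ'(t) = Σ_{e=(v→w)} U_e(t) B_e μ(t) satisfies μ(0) = μ₀ and μ(1) = μ₁. -/

import Mathlib

/-!
Follow the segment `μ t = (1 - t) μ₀ + t μ₁`. Its velocity `μ₁ - μ₀` has total mass zero, and by
strong connectivity every such vector is a nonnegative combination `∑ e, c e • (δ_{tgt e} - δ_{src e})`
of edge vectors. Since `B e *ᵥ x = x (src e) • (δ_{tgt e} - δ_{src e})`, the controls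
`U e t = c e / μ t (src e)` produce exactly this velocity, as `μ t` stays positive on `[0, 1]`.
-/

open Finset Set

section

variable {V ι : Type*} [DecidableEq V]

def edgeVector (src tgt : ι → V) (e : ι) : V → ℝ :=
  Pi.single (tgt e) 1 - Pi.single (src e) 1

theorem single_sub_single_mem_hull_edgeVector {src tgt : ι → V} {a b : V}
    (h : Relation.ReflTransGen (fun p q => ∃ e, src e = p ∧ tgt e = q) a b) :
    Pi.single b 1 - Pi.single a 1 ∈ PointedCone.hull ℝ (range (edgeVector src tgt)) := by
  induction h with
  | refl => simp
  | tail _ hbc ih =>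
    obtain ⟨e, rfl, rfl⟩ := hbc
    convert add_mem ih (PointedCone.subset_hull (mem_range_self e)) using 1
    simp only [edgeVector]
    abel

theorem mem_hull_edgeVector_of_sum_eq_zero [Fintype V] {src tgt : ι → V}
    (hconn : ∀ v w, Relation.ReflTransGen (fun p q => ∃ e, src e = p ∧ tgt e = q) v w)
    {d : V → ℝ} (hd : ∑ v, d v = 0) :
    d ∈ PointedCone.hull ℝ (range (edgeVector src tgt)) := by
  rcases isEmpty_or_nonempty V with _ | ⟨⟨v₀⟩⟩
  · simp [Subsingleton.elim d 0]
  · have hd_eq : d = ∑ v, d v • (Pi.single v 1 - Pi.single v₀ 1 : V → ℝ) := by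
      ext u
      simp [Finset.sum_apply, Pi.single_apply, mul_sub, Finset.sum_sub_distrib, hd]
    rw [hd_eq]
    refine sum_mem fun v _ => ?_
    rcases le_total 0 (d v) with hv | hv
    · exact Submodule.smul_mem _ (⟨d v, hv⟩ : {c : ℝ // 0 ≤ c})
        (single_sub_single_mem_hull_edgeVector (hconn v₀ v))
    · have := Submodule.smul_mem _ (⟨-d v, neg_nonneg.2 hv⟩ : {c : ℝ // 0 ≤ c})
        (single_sub_single_mem_hull_edgeVector (hconn v v₀))
      convert this using 1
      simp only [Nonneg.mk_smul, smul_sub, neg_smul]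
      abel

theorem mulVec_eq_smul_single_sub_single [Fintype V] {M : Matrix V V ℝ} {a b : V} (hab : a ≠ b)
    (hM : ∀ p q, M p q = if p = a ∧ q = a then -1 else if p = b ∧ q = a then 1 else 0)
    (x : V → ℝ) : M.mulVec x = x a • (Pi.single b 1 - Pi.single a 1) := by
  ext p
  rcases eq_or_ne p a with rfl | hpa
  · simp [Matrix.mulVec, dotProduct, hM, hab]
  · simp [Matrix.mulVec, dotProduct, hM, hpa, Pi.single_apply, ite_and]

theorem sum_div_smul_mulVec_eq_sum_smul_edgeVector [Fintype V] [Fintype ι] {src tgt : ι → V}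
    (hst : ∀ e, src e ≠ tgt e) {B : ι → Matrix V V ℝ}
    (hB : ∀ e p q, B e p q =
      if p = src e ∧ q = src e then -1 else if p = tgt e ∧ q = src e then 1 else 0)
    {x : V → ℝ} (hx : ∀ v, 0 < x v) (c : ι → ℝ) :
    ∑ e, (c e / x (src e)) • (B e).mulVec x = ∑ e, c e • edgeVector src tgt e := by
  refine sum_congr rfl fun e _ => ?_
  rw [mulVec_eq_smul_single_sub_single (hst e) (hB e), smul_smul, div_mul_cancel₀ _ (hx _).ne',
    edgeVector]

end

theorem driftless_graph_controllability_general
    (m : ℕ) (ι : Type*) [Fintype ι]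
    (src tgt : ι → Fin m) (hst : ∀ e, src e ≠ tgt e)
    (hconn : ∀ v w : Fin m,
      Relation.ReflTransGen (fun p q => ∃ e, src e = p ∧ tgt e = q) v w)
    (B : ι → Matrix (Fin m) (Fin m) ℝ)
    (hB : ∀ e p q, B e p q =
      if p = src e ∧ q = src e then -1 else if p = tgt e ∧ q = src e then 1 else 0)
    (μ₀ μ₁ : Fin m → ℝ)
    (h₀pos : ∀ v, 0 < μ₀ v) (h₀sum : ∑ v, μ₀ v = 1)
    (h₁pos : ∀ v, 0 < μ₁ v) (h₁sum : ∑ v, μ₁ v = 1) :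
    ∃ (U : ι → ℝ → ℝ) (μ : ℝ → Fin m → ℝ),
      (∀ e t, 0 ≤ U e t) ∧
      -- piecewise continuity: continuous off a finite set of breakpoints
      (∃ s : Finset ℝ, ∀ e, ContinuousOn (U e) (Set.Icc (0 : ℝ) 1 \ (s : Set ℝ))) ∧
      μ 0 = μ₀ ∧ μ 1 = μ₁ ∧
      (∀ t ∈ Set.Icc (0 : ℝ) 1,
        HasDerivAt μ (∑ e, U e t • (B e).mulVec (μ t)) t) := by
  obtain ⟨c, hc⟩ := (Submodule.mem_span_range_iff_exists_fun _).1
    (mem_hull_edgeVector_of_sum_eq_zero hconn (d := μ₁ - μ₀)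
      (by simp [Finset.sum_sub_distrib, h₀sum, h₁sum]))
  replace hc : ∑ e, (c e : ℝ) • edgeVector src tgt e = μ₁ - μ₀ := hc
  set μ : ℝ → Fin m → ℝ := ⇑(AffineMap.lineMap (k := ℝ) μ₀ μ₁)
  have hμ_pos : ∀ t ∈ Icc (0 : ℝ) 1, ∀ v, 0 < μ t v := fun t ht => by
    have hconv : Convex ℝ (univ.pi fun _ : Fin m => Ioi (0 : ℝ)) := convex_pi fun _ _ => convex_Ioi 0
    simpa using hconv.lineMap_mem (by simpa using h₀pos) (by simpa using h₁pos) ht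
  set τ : ℝ → Icc (0 : ℝ) 1 := projIcc 0 1 zero_le_one
  refine ⟨fun e t => c e / μ (τ t) (src e), μ,
    fun e t => div_nonneg (c e).2 (hμ_pos _ (τ t).2 _).le, ⟨∅, fun e => ?_⟩,
    by simp [μ], by simp [μ], fun t ht => ?_⟩
  · exact (continuous_const.div (by fun_prop) fun t => (hμ_pos _ (τ t).2 _).ne').continuousOn
  · simp only [τ, projIcc_of_mem _ ht]
    rw [sum_div_smul_mulVec_eq_sum_smul_edgeVector hst hB (hμ_pos t ht), hc]
    exact AffineMap.hasDerivAt_lineMap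

/-- Controllability on the simplex interior for driftless graph flows:
for a symmetric strongly connected graph and any `μ₀, μ₁` in the interior of the probability
simplex, there exist piecewise-continuous nonnegative controls `U_e(t)` such that the solution
of `μ'(t) = Σ_e U_e(t) B_e μ(t)` satisfies `μ(0) = μ₀` and `μ(1) = μ₁`. -/
theorem driftless_graph_controllability
    (m : ℕ) (hm : 2 ≤ m) (ι : Type*) [Fintype ι]
    (src tgt : ι → Fin m) (hst : ∀ e, src e ≠ tgt e)
    (hsymm : ∀ e : ι, ∃ e' : ι, src e' = tgt e ∧ tgt e' = src e)
    (hconn : ∀ v w : Fin m,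
      Relation.ReflTransGen (fun p q => ∃ e, src e = p ∧ tgt e = q) v w)
    (B : ι → Matrix (Fin m) (Fin m) ℝ)
    (hB : ∀ e p q, B e p q =
      if p = src e ∧ q = src e then -1 else if p = tgt e ∧ q = src e then 1 else 0)
    (μ₀ μ₁ : Fin m → ℝ)
    (h₀pos : ∀ v, 0 < μ₀ v) (h₀sum : ∑ v, μ₀ v = 1)
    (h₁pos : ∀ v, 0 < μ₁ v) (h₁sum : ∑ v, μ₁ v = 1) :
    ∃ (U : ι → ℝ → ℝ) (μ : ℝ → Fin m → ℝ),
      (∀ e t, 0 ≤ U e t) ∧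
      -- piecewise continuity: continuous off a finite set of breakpoints
      (∃ s : Finset ℝ, ∀ e, ContinuousOn (U e) (Set.Icc (0 : ℝ) 1 \ (s : Set ℝ))) ∧
      μ 0 = μ₀ ∧ μ 1 = μ₁ ∧
      (∀ t ∈ Set.Icc (0 : ℝ) 1,
        HasDerivAt μ (∑ e, U e t • (B e).mulVec (μ t)) t) :=
  driftless_graph_controllability_general m ι src tgt hst hconn B hB μ₀ μ₁ h₀pos h₀sum h₁pos h₁sum
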